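/- Let (R, 𝔪) be a commutative local ring and f : R^a → R^b an R-linear map. If the cokernel of f is a free R-module, then for every x ∈ R^a with f(x) ∈ 𝔪·R^b one has f(x) ∈ 𝔪·f(R^a) + 𝔪²·R^b. (This is the commutative local-ring form of the statement that if the first cohomology sheaf of a two-term complex of vector bundles is locally free at a point, then the obstruction map κ at that point vanishes.) -/

import Mathlib

/-! A projective quotient `M ⧸ N` splits off `N` as a direct summand, via a retraction `r : M → N`.
Applying `r` to `I • M` lands in `I • N`, so `I • M ∩ N = I • N`; for `N = range f` and `I = 𝔪`
this already puts `f x` in `𝔪 • range f`. -/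

namespace Submodule

variable {R M : Type*} [CommRing R] [AddCommGroup M] [Module R M]

theorem exists_retraction_of_projective_quotient (N : Submodule R M)
    [Module.Projective R (M ⧸ N)] : ∃ r : M →ₗ[R] N, ∀ x : N, r x = x := by
  obtain ⟨s, hs⟩ := Module.projective_lifting_property N.mkQ LinearMap.id N.mkQ_surjective
  have hmem : ∀ y, y - s (N.mkQ y) ∈ N := fun y ↦
    (Quotient.eq N).1 (LinearMap.congr_fun hs (N.mkQ y)).symm
  refine ⟨(LinearMap.id - s ∘ₗ N.mkQ).codRestrict N hmem, fun x ↦ ?_⟩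
  ext
  simp [(Quotient.mk_eq_zero N).2 x.2]

theorem smul_top_inf_le_smul_of_retraction (I : Ideal R) {N : Submodule R M}
    (r : M →ₗ[R] N) (hr : ∀ x : N, r x = x) : I • ⊤ ⊓ N ≤ I • N := by
  rintro x ⟨hxI, hxN⟩
  have hx : x = (N.subtype ∘ₗ r) x := by simp [hr ⟨x, hxN⟩]
  rw [hx]
  have hmap : (N.subtype ∘ₗ r) x ∈ I • LinearMap.range (N.subtype ∘ₗ r) := by
    rw [← map_top, ← map_smul'']
    exact mem_map_of_mem hxI
  have hrange : LinearMap.range (N.subtype ∘ₗ r) ≤ N := by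
    rintro _ ⟨y, rfl⟩
    exact (r y).2
  exact smul_mono_right I hrange hmap

theorem smul_top_inf_eq_smul_of_projective_quotient (I : Ideal R) (N : Submodule R M)
    [Module.Projective R (M ⧸ N)] : I • ⊤ ⊓ N = I • N := by
  obtain ⟨r, hr⟩ := N.exists_retraction_of_projective_quotient
  exact le_antisymm (smul_top_inf_le_smul_of_retraction I r hr)
    (le_inf (smul_mono_right I le_top) smul_le_right)

end Submodule

theorem stmt_3 {R : Type*} [CommRing R] [IsLocalRing R] (a b : ℕ)
    (f : (Fin a → R) →ₗ[R] (Fin b → R))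
    (hfree : Module.Free R ((Fin b → R) ⧸ LinearMap.range f)) :
    ∀ x : Fin a → R,
      f x ∈ IsLocalRing.maximalIdeal R • (⊤ : Submodule R (Fin b → R)) →
      f x ∈ IsLocalRing.maximalIdeal R • LinearMap.range f ⊔
        (IsLocalRing.maximalIdeal R) ^ 2 • (⊤ : Submodule R (Fin b → R)) := by
  intro x hx
  have hxN : f x ∈ IsLocalRing.maximalIdeal R • LinearMap.range f := by
    rw [← Submodule.smul_top_inf_eq_smul_of_projective_quotient]
    exact ⟨hx, LinearMap.mem_range_self f x⟩
  exact Submodule.mem_sup_left hxN
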